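/- Let H be a complex Hilbert space, M ⊆ B(H) a von Neumann algebra, and p ∈ M a cyclic projection. Then the closed subspace L_p M_* = {φ ∈ M_* : φ(x) = φ(p x) for all x ∈ M} of the predual M_* is weakly compactly generated, and likewise R_p M_* = {φ ∈ M_* : φ(x) = φ(x p) for all x ∈ M} is weakly compactly generated. -/

import Mathlib

set_option synthInstance.maxHeartbeats 1000000
set_option maxHeartbeats 1000000

noncomputable section

namespace Paper

open scoped ComplexConjugate

variable {H : Type*} [NormedAddCommGroup H] [InnerProductSpace ℂ H] [CompleteSpace H]

variable (M : VonNeumannAlgebra H)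

/-- The von Neumann algebra `M` regarded as a closed subspace of `B(H)`;
its subtype `↥(carrier M)` is the Banach space `M`. -/
def carrier : Submodule ℂ (H →L[ℂ] H) := M.toStarSubalgebra.toSubalgebra.toSubmodule

theorem mem_carrier {x : H →L[ℂ] H} : x ∈ carrier M ↔ x ∈ M := Iff.rfl

instance (priority := 10000) : NormedAddCommGroup ↥(carrier M) := inferInstance
instance (priority := 10000) : NormedSpace ℂ ↥(carrier M) := inferInstance
instance (priority := 10000) : NormedAddCommGroup (↥(carrier M) →L[ℂ] ℂ) := inferInstance
instance (priority := 10000) : NormedSpace ℂ (↥(carrier M) →L[ℂ] ℂ) := inferInstance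
instance (priority := 10000) : ContinuousAdd (↥(carrier M) →L[ℂ] ℂ) := by
  have h : IsTopologicalAddGroup (↥(carrier M) →L[ℂ] ℂ) := inferInstance
  exact h.toContinuousAdd

/-- The vector functional `ω_{ξ,η} : x ↦ ⟪x ξ, η⟫` (inner product linear in the first slot,
i.e. `⟪u, v⟫ = inner v u` in Mathlib's convention), as a continuous linear functional on `M`. -/
def vecFunctional (ξ η : H) : ↥(carrier M) →L[ℂ] ℂ :=
  (innerSL ℂ η).comp ((ContinuousLinearMap.apply ℂ H ξ).comp (carrier M).subtypeL)

theorem vecFunctional_apply (ξ η : H) (x : ↥(carrier M)) :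
    vecFunctional M ξ η x = inner ℂ η ((x : H →L[ℂ] H) ξ) := rfl

/-- The predual `M_*` of `M`: the norm-closed linear span, inside the dual of `M`,
of the vector functionals `ω_{ξ,η}`. -/
def predual : Submodule ℂ (↥(carrier M) →L[ℂ] ℂ) :=
  (Submodule.span ℂ {φ | ∃ ξ η : H, φ = vecFunctional M ξ η}).topologicalClosure

theorem vecFunctional_mem_predual (ξ η : H) : vecFunctional M ξ η ∈ predual M :=
  Submodule.le_topologicalClosure _ (Submodule.subset_span ⟨ξ, η, rfl⟩)

instance (priority := 10000) : NormedAddCommGroup ↥(predual M) := inferInstance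
instance (priority := 10000) : NormedSpace ℂ ↥(predual M) := inferInstance
instance (priority := 10000) : NormedSpace ℝ ↥(predual M) := inferInstance
instance (priority := 10000) : NormedAddCommGroup (↥(predual M) →L[ℂ] ℂ) := inferInstance
instance (priority := 10000) : NormedSpace ℂ (↥(predual M) →L[ℂ] ℂ) := inferInstance

/-- a projection belonging to `M` -/
def IsProjectionIn (p : H →L[ℂ] H) : Prop := p ∈ M ∧ IsSelfAdjoint p ∧ p * p = p

/-- `M` is σ-finite: every family of pairwise orthogonal nonzero projections in `M`
is countable. -/
def SigmaFinite : Prop :=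
  ∀ P : Set (H →L[ℂ] H),
    (∀ p ∈ P, IsProjectionIn M p ∧ p ≠ 0) →
    (∀ p ∈ P, ∀ q ∈ P, p ≠ q → p * q = 0) →
    P.Countable

/-- A projection `q ∈ M` is σ-finite if every family of pairwise orthogonal nonzero
projections `p ∈ M` with `p = q p q` is countable. -/
def IsSigmaFiniteProjection (q : H →L[ℂ] H) : Prop :=
  IsProjectionIn M q ∧
    ∀ P : Set (H →L[ℂ] H),
      (∀ p ∈ P, IsProjectionIn M p ∧ p ≠ 0 ∧ p = q * p * q) →
      (∀ p ∈ P, ∀ r ∈ P, p ≠ r → p * r = 0) →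
      P.Countable

/-- `ξ` is a generating vector for the projection `p ∈ M`:
the set `M'ξ = {a ξ : a ∈ M'}` is dense in `pH`, the range of `p`. -/
def IsGeneratingVector (p : H →L[ℂ] H) (ξ : H) : Prop :=
  closure {v : H | ∃ a ∈ M.commutant, v = a ξ} = Set.range p

/-- a cyclic projection in `M` -/
def IsCyclicProjection (p : H →L[ℂ] H) : Prop :=
  IsProjectionIn M p ∧ ∃ ξ : H, IsGeneratingVector M p ξ

/-- The self-adjoint part `M_*^{sa}` of the predual: those `ω ∈ M_*` with
`ω (x*) = conj (ω x)` for all `x ∈ M`; a real-linear subspace of `M_*`. -/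
def predualSA : Submodule ℝ ↥(predual M) where
  carrier := {ω | ∀ (x : H →L[ℂ] H) (hx : x ∈ M),
    (ω : ↥(carrier M) →L[ℂ] ℂ) ⟨star x, (mem_carrier M).mpr (star_mem hx)⟩ =
      conj ((ω : ↥(carrier M) →L[ℂ] ℂ) ⟨x, hx⟩)}
  add_mem' := by
    intro a b ha hb x hx
    simp only [Submodule.coe_add, ContinuousLinearMap.add_apply, ha x hx, hb x hx, map_add]
  zero_mem' := by
    intro x hx
    simp only [ZeroMemClass.coe_zero, ContinuousLinearMap.zero_apply, map_zero]
  smul_mem' := by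
    intro r ω hω x hx
    simp only [SetLike.val_smul_of_tower, ContinuousLinearMap.coe_smul', Pi.smul_apply, hω x hx]
    rw [show (conj ((ω : ↥(carrier M) →L[ℂ] ℂ) ⟨x, hx⟩)) = star ((ω : ↥(carrier M) →L[ℂ] ℂ) ⟨x, hx⟩) from rfl,
      show (conj (r • (ω : ↥(carrier M) →L[ℂ] ℂ) ⟨x, hx⟩)) = star (r • (ω : ↥(carrier M) →L[ℂ] ℂ) ⟨x, hx⟩) from rfl,
      star_smul, star_trivial r]

instance (priority := 10000) : NormedAddCommGroup ↥(predualSA M) := inferInstance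
instance (priority := 10000) : NormedSpace ℝ ↥(predualSA M) := inferInstance
instance (priority := 10000) : NormedAddCommGroup (↥(predualSA M) →L[ℝ] ℝ) := inferInstance
instance (priority := 10000) : NormedSpace ℝ (↥(predualSA M) →L[ℝ] ℝ) := inferInstance

/-- For a projection `p ∈ M`, the subspace `L_p M_* = {φ ∈ M_* : φ(x) = φ(p x)}` of the
predual. -/
def leftPart (p : H →L[ℂ] H) (hp : p ∈ M) : Submodule ℂ ↥(predual M) where
  carrier := {φ | ∀ (x : H →L[ℂ] H) (hx : x ∈ M),
    (φ : ↥(carrier M) →L[ℂ] ℂ) ⟨x, hx⟩ =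
      (φ : ↥(carrier M) →L[ℂ] ℂ) ⟨p * x, (mem_carrier M).mpr (mul_mem hp hx)⟩}
  add_mem' := by
    intro a b ha hb x hx
    simp only [Submodule.coe_add, ContinuousLinearMap.add_apply, ha x hx, hb x hx]
  zero_mem' := by
    intro x hx
    simp only [ZeroMemClass.coe_zero, ContinuousLinearMap.zero_apply]
  smul_mem' := by
    intro c φ hφ x hx
    simp only [SetLike.val_smul, ContinuousLinearMap.coe_smul', Pi.smul_apply, hφ x hx]

/-- For a projection `p ∈ M`, the subspace `R_p M_* = {φ ∈ M_* : φ(x) = φ(x p)}` of the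
predual. -/
def rightPart (p : H →L[ℂ] H) (hp : p ∈ M) : Submodule ℂ ↥(predual M) where
  carrier := {φ | ∀ (x : H →L[ℂ] H) (hx : x ∈ M),
    (φ : ↥(carrier M) →L[ℂ] ℂ) ⟨x, hx⟩ =
      (φ : ↥(carrier M) →L[ℂ] ℂ) ⟨x * p, (mem_carrier M).mpr (mul_mem hx hp)⟩}
  add_mem' := by
    intro a b ha hb x hx
    simp only [Submodule.coe_add, ContinuousLinearMap.add_apply, ha x hx, hb x hx]
  zero_mem' := by
    intro x hx
    simp only [ZeroMemClass.coe_zero, ContinuousLinearMap.zero_apply]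
  smul_mem' := by
    intro c φ hφ x hx
    simp only [SetLike.val_smul, ContinuousLinearMap.coe_smul', Pi.smul_apply, hφ x hx]

instance (priority := 10000) (p : H →L[ℂ] H) (hp : p ∈ M) :
    NormedAddCommGroup ↥(leftPart M p hp) := inferInstance
instance (priority := 10000) (p : H →L[ℂ] H) (hp : p ∈ M) :
    NormedSpace ℂ ↥(leftPart M p hp) := inferInstance
instance (priority := 10000) (p : H →L[ℂ] H) (hp : p ∈ M) :
    NormedAddCommGroup ↥(rightPart M p hp) := inferInstance
instance (priority := 10000) (p : H →L[ℂ] H) (hp : p ∈ M) :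
    NormedSpace ℂ ↥(rightPart M p hp) := inferInstance

/-! Fix a vector `ξ` generating `p`, so `p ξ = ξ`. The maps `ζ ↦ ω_{ζ,ξ}` on `H` and
`f ↦ (x ↦ f (x ξ))` on `H*` are bounded linear maps into `L_p M_*` and `R_p M_*`. The unit balls
of `H` and `H*` are weakly compact (Banach–Alaoglu in `H*` together with the Riesz
representation), so their images are weakly compact. The ranges are dense: `φ ∈ L_p M_*`
satisfies `φ = φ(p ·)`, so it is a limit of functionals `ω_{ζ,η}(p ·) = ω_{ζ,pη}`; here `pη`
is a limit of vectors `a ξ` with `a ∈ M'`, and `ω_{ζ,aξ} = ω_{a* ζ,ξ}`. The right part is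
symmetric, with `ω_{ζ,η}(· p) = ω_{pζ,η}` and `ω_{aξ,η} = ω_{ξ,a* η}`. -/

open ContinuousLinearMap InnerProductSpace Metric

section WeakCompactness

variable {E : Type*} [NormedAddCommGroup E] [InnerProductSpace ℂ E] [CompleteSpace E]

/-- Reflexivity of a Hilbert space: `w` is the Riesz vector of the conjugate of `Ψ ∘ toDual`. -/
lemma exists_apply_eq_of_strongDual_strongDual (Ψ : StrongDual ℂ (StrongDual ℂ E)) :
    ∃ w : E, ∀ f : StrongDual ℂ E, Ψ f = f w := by
  let G : StrongDual ℂ E := LinearMap.mkContinuous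
    { toFun := fun v => conj (Ψ (toDual ℂ E v))
      map_add' := by simp
      map_smul' := by simp [map_smulₛₗ] }
    ‖Ψ‖ fun v => by simpa using Ψ.le_opNorm (toDual ℂ E v)
  refine ⟨(toDual ℂ E).symm G, fun f => ?_⟩
  obtain ⟨v, rfl⟩ := (toDual ℂ E).surjective f
  rw [toDual_apply_apply, ← inner_conj_symm, toDual_symm_apply]
  simp [G]

lemma continuous_toWeakSpace_toDual_symm :
    Continuous fun f : WeakDual ℂ E =>
      toWeakSpace ℂ E ((toDual ℂ E).symm (WeakDual.toStrongDual f)) := by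
  refine WeakBilin.continuous_of_continuous_eval _ fun ψ => ?_
  refine (WeakDual.eval_continuous ((toDual ℂ E).symm ψ)).star.congr fun f => ?_
  show conj (f ((toDual ℂ E).symm ψ)) = ψ ((toDual ℂ E).symm f)
  rw [← toDual_symm_apply, ← inner_conj_symm]
  exact congrArg conj (toDual_symm_apply (y := WeakDual.toStrongDual f)).symm

lemma isCompact_toWeakSpace_closedBall (r : ℝ) :
    IsCompact (toWeakSpace ℂ E '' closedBall 0 r) := by
  have := (WeakDual.isCompact_closedBall (𝕜 := ℂ) (0 : StrongDual ℂ E) r).image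
    continuous_toWeakSpace_toDual_symm
  have hball : closedBall (0 : E) r = (toDual ℂ E).symm '' closedBall 0 r := by
    simp
  convert this using 1
  rw [hball, Set.image_image]
  rfl

lemma continuous_toWeakSpace_toStrongDual :
    Continuous fun f : WeakDual ℂ E =>
      toWeakSpace ℂ (StrongDual ℂ E) (WeakDual.toStrongDual f) := by
  refine WeakBilin.continuous_of_continuous_eval _ fun Ψ => ?_
  obtain ⟨w, hw⟩ := exists_apply_eq_of_strongDual_strongDual Ψ
  exact (WeakDual.eval_continuous w).congr fun f => (hw f).symm

lemma isCompact_toWeakSpace_closedBall_strongDual (r : ℝ) :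
    IsCompact (toWeakSpace ℂ (StrongDual ℂ E) '' closedBall 0 r) :=
  (WeakDual.isCompact_closedBall (𝕜 := ℂ) (0 : StrongDual ℂ E) r).image
    continuous_toWeakSpace_toStrongDual

end WeakCompactness

section WeaklyCompactlyGenerated

variable {𝕜 E F : Type*} [NontriviallyNormedField 𝕜] [NormedAddCommGroup E] [NormedSpace 𝕜 E]
  [NormedAddCommGroup F] [NormedSpace 𝕜 F]

lemma span_closedBall_eq_top {r : ℝ} (hr : 0 < r) :
    Submodule.span 𝕜 (closedBall (0 : E) r) = ⊤ := by
  refine Submodule.eq_top_of_nonempty_interior' _ ⟨0, interior_mono Submodule.subset_span ?_⟩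
  exact mem_interior_iff_mem_nhds.2 (closedBall_mem_nhds 0 hr)

lemma exists_isCompact_weak_dense_span_of_denseRange (T : E →L[𝕜] F)
    (hK : IsCompact (toWeakSpace 𝕜 E '' closedBall 0 1)) (hT : DenseRange T) :
    ∃ K : Set F, IsCompact (toWeakSpaceCLM 𝕜 F '' K) ∧ Dense (Submodule.span 𝕜 K : Set F) := by
  refine ⟨T '' closedBall 0 1, ?_, ?_⟩
  · convert hK.image (WeakSpace.map T).continuous using 1
    rw [Set.image_image, Set.image_image]
    rfl
  · rw [← T.coe_coe, Submodule.span_image, span_closedBall_eq_top one_pos, Submodule.map_top]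
    exact hT

end WeaklyCompactlyGenerated

lemma mapsTo_topologicalClosure_span {R X Y : Type*} [Ring R]
    [AddCommGroup X] [Module R X] [TopologicalSpace X] [ContinuousAdd X] [ContinuousConstSMul R X]
    [AddCommGroup Y] [Module R Y] [TopologicalSpace Y] [ContinuousAdd Y] [ContinuousConstSMul R Y]
    (P : X →L[R] Y) {S : Set X} {D : Submodule R Y} (h : Set.MapsTo P S D.topologicalClosure) :
    Set.MapsTo P (Submodule.span R S).topologicalClosure D.topologicalClosure := by
  have hspan : Submodule.span R S ≤ D.topologicalClosure.comap (P : X →ₗ[R] Y) :=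
    Submodule.span_le.2 h
  intro x hx
  have := map_mem_closure (t := (D.topologicalClosure : Set Y)) P.continuous hx
    fun y hy => hspan hy
  rwa [D.isClosed_topologicalClosure.closure_eq] at this

lemma denseRange_of_isInducing {Y Z X : Type*} [TopologicalSpace Z] [TopologicalSpace X]
    {ι : Z → X} (hι : Topology.IsInducing ι) {T : Y → Z}
    (h : ∀ z, ι z ∈ closure (Set.range (ι ∘ T))) : DenseRange T := by
  rw [DenseRange, hι.dense_iff, ← Set.range_comp]
  exact h

section Functionals

def evalCLM : H →L[ℂ] ↥(carrier M) →L[ℂ] H :=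
  (compL ℂ ↥(carrier M) (H →L[ℂ] H) H).flip (carrier M).subtypeL ∘L apply ℂ H

def vecFunctionalCLM (η : H) : H →L[ℂ] ↥(carrier M) →L[ℂ] ℂ :=
  compL ℂ ↥(carrier M) H ℂ (innerSL ℂ η) ∘L evalCLM M

/-- Parametrised by `H*` rather than by `η ∈ H`, which would make it conjugate-linear. -/
def dualVecFunctional (ξ : H) : StrongDual ℂ H →L[ℂ] ↥(carrier M) →L[ℂ] ℂ :=
  (compL ℂ ↥(carrier M) H ℂ).flip (evalCLM M ξ)

lemma vecFunctionalCLM_apply (ζ η : H) : vecFunctionalCLM M η ζ = vecFunctional M ζ η := rfl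

lemma dualVecFunctional_toDual (ξ η : H) :
    dualVecFunctional M ξ (toDual ℂ H η) = vecFunctional M ξ η := rfl

lemma dualVecFunctional_mem_predual (ξ : H) (f : StrongDual ℂ H) :
    dualVecFunctional M ξ f ∈ predual M := by
  rw [← (toDual ℂ H).apply_symm_apply f, dualVecFunctional_toDual]
  exact vecFunctional_mem_predual M _ _

lemma continuous_vecFunctional_right (ζ : H) : Continuous fun η => vecFunctional M ζ η :=
  (dualVecFunctional M ζ).continuous.comp (toDual ℂ H).continuous

variable {M}

lemma vecFunctional_apply_left_eq_adjoint {a : H →L[ℂ] H} (ha : a ∈ M.commutant) (ζ η : H) :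
    vecFunctional M (a ζ) η = vecFunctional M ζ (adjoint a η) := by
  ext x
  rw [vecFunctional_apply, vecFunctional_apply, adjoint_inner_left,
    ← ContinuousLinearMap.mul_apply, ← ContinuousLinearMap.mul_apply,
    VonNeumannAlgebra.mem_commutant_iff.mp ha _ x.2]

lemma vecFunctional_mem_closure_range_dualVecFunctional {ξ ζ : H}
    (hζ : ζ ∈ closure {v : H | ∃ a ∈ M.commutant, v = a ξ}) (η : H) :
    vecFunctional M ζ η ∈ closure (Set.range (dualVecFunctional M ξ)) := by
  refine map_mem_closure (f := fun ζ => vecFunctional M ζ η) (vecFunctionalCLM M η).continuous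
    hζ ?_
  rintro _ ⟨a, ha, rfl⟩
  exact ⟨toDual ℂ H (adjoint a η), (vecFunctional_apply_left_eq_adjoint ha ξ η).symm⟩

lemma vecFunctional_mem_closure_range_vecFunctionalCLM {ξ η : H}
    (hη : η ∈ closure {v : H | ∃ a ∈ M.commutant, v = a ξ}) (ζ : H) :
    vecFunctional M ζ η ∈ closure (Set.range (vecFunctionalCLM M ξ)) := by
  refine map_mem_closure (continuous_vecFunctional_right M ζ) hη ?_
  rintro _ ⟨a, ha, rfl⟩
  have ha' : adjoint a ∈ M.commutant := by
    rw [← star_eq_adjoint]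
    exact star_mem ha
  refine ⟨adjoint a ζ, ?_⟩
  rw [vecFunctionalCLM_apply, vecFunctional_apply_left_eq_adjoint ha', adjoint_adjoint]

end Functionals

section Parts

variable {M} {p : H →L[ℂ] H}

lemma IsGeneratingVector.apply_eq (hpp : p * p = p) {ξ : H}
    (hgen : IsGeneratingVector M p ξ) : p ξ = ξ := by
  obtain ⟨v, rfl⟩ : ξ ∈ Set.range p := hgen ▸ subset_closure ⟨1, one_mem _, rfl⟩
  rw [← ContinuousLinearMap.mul_apply, hpp]

def leftMul (hp : p ∈ M) : ↥(carrier M) →L[ℂ] ↥(carrier M) :=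
  ((mul ℂ (H →L[ℂ] H) p).comp (carrier M).subtypeL).codRestrict (carrier M)
    fun x => (mem_carrier M).mpr (mul_mem hp ((mem_carrier M).mp x.2))

def rightMul (hp : p ∈ M) : ↥(carrier M) →L[ℂ] ↥(carrier M) :=
  (((mul ℂ (H →L[ℂ] H)).flip p).comp (carrier M).subtypeL).codRestrict (carrier M)
    fun x => (mem_carrier M).mpr (mul_mem ((mem_carrier M).mp x.2) hp)

lemma vecFunctional_comp_leftMul (hp : p ∈ M) (ζ η : H) :
    (vecFunctional M ζ η).comp (leftMul hp) = vecFunctional M ζ (adjoint p η) := by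
  ext x
  exact (adjoint_inner_left p _ η).symm

lemma vecFunctional_comp_rightMul (hp : p ∈ M) (ζ η : H) :
    (vecFunctional M ζ η).comp (rightMul hp) = vecFunctional M (p ζ) η :=
  rfl

lemma comp_leftMul_of_mem_leftPart (hp : p ∈ M) (φ : leftPart M p hp) :
    ((φ : predual M) : ↥(carrier M) →L[ℂ] ℂ).comp (leftMul hp) = φ :=
  ext fun x => (φ.2 x x.2).symm

lemma comp_rightMul_of_mem_rightPart (hp : p ∈ M) (φ : rightPart M p hp) :
    ((φ : predual M) : ↥(carrier M) →L[ℂ] ℂ).comp (rightMul hp) = φ :=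
  ext fun x => (φ.2 x x.2).symm

lemma comp_leftMul_mem_closure_range (hp : p ∈ M) (hsa : IsSelfAdjoint p) {ξ : H}
    (hgen : IsGeneratingVector M p ξ) {φ : ↥(carrier M) →L[ℂ] ℂ} (hφ : φ ∈ predual M) :
    φ.comp (leftMul hp) ∈ closure (Set.range (vecFunctionalCLM M ξ)) := by
  refine mapsTo_topologicalClosure_span ((compL ℂ _ _ ℂ).flip (leftMul hp))
    (D := LinearMap.range (vecFunctionalCLM M ξ : H →ₗ[ℂ] _)) ?_ hφ
  rintro _ ⟨ζ, η, rfl⟩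
  change (vecFunctional M ζ η).comp (leftMul hp) ∈ closure (Set.range (vecFunctionalCLM M ξ))
  rw [vecFunctional_comp_leftMul]
  refine vecFunctional_mem_closure_range_vecFunctionalCLM ?_ ζ
  rw [hsa.adjoint_eq, hgen]
  exact Set.mem_range_self η

lemma comp_rightMul_mem_closure_range (hp : p ∈ M) {ξ : H} (hgen : IsGeneratingVector M p ξ)
    {φ : ↥(carrier M) →L[ℂ] ℂ} (hφ : φ ∈ predual M) :
    φ.comp (rightMul hp) ∈ closure (Set.range (dualVecFunctional M ξ)) := by
  refine mapsTo_topologicalClosure_span ((compL ℂ _ _ ℂ).flip (rightMul hp))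
    (D := LinearMap.range (dualVecFunctional M ξ : StrongDual ℂ H →ₗ[ℂ] _)) ?_ hφ
  rintro _ ⟨ζ, η, rfl⟩
  change (vecFunctional M ζ η).comp (rightMul hp) ∈ closure (Set.range (dualVecFunctional M ξ))
  rw [vecFunctional_comp_rightMul]
  refine vecFunctional_mem_closure_range_dualVecFunctional ?_ η
  rw [hgen]
  exact Set.mem_range_self ζ

def leftPartMap (hp : p ∈ M) {ξ : H} (hξ : adjoint p ξ = ξ) : H →L[ℂ] leftPart M p hp :=
  ((vecFunctionalCLM M ξ).codRestrict (predual M) fun ζ => vecFunctional_mem_predual M ζ ξ)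
    |>.codRestrict (leftPart M p hp) fun ζ x hx => by
      change vecFunctional M ζ ξ ⟨x, hx⟩ = (vecFunctional M ζ ξ).comp (leftMul hp) ⟨x, hx⟩
      rw [vecFunctional_comp_leftMul, hξ]

def rightPartMap (hp : p ∈ M) {ξ : H} (hξ : p ξ = ξ) : StrongDual ℂ H →L[ℂ] rightPart M p hp :=
  ((dualVecFunctional M ξ).codRestrict (predual M) (dualVecFunctional_mem_predual M ξ))
    |>.codRestrict (rightPart M p hp) fun f x hx => by
      change f (x ξ) = f (x (p ξ))
      rw [hξ]

lemma denseRange_leftPartMap (hp : p ∈ M) (hsa : IsSelfAdjoint p) {ξ : H}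
    (hgen : IsGeneratingVector M p ξ) (hξ : adjoint p ξ = ξ) :
    DenseRange (leftPartMap hp hξ) := by
  refine denseRange_of_isInducing (.comp .subtypeVal .subtypeVal) fun φ => ?_
  change ((φ : predual M) : ↥(carrier M) →L[ℂ] ℂ) ∈ closure (Set.range (vecFunctionalCLM M ξ))
  rw [← comp_leftMul_of_mem_leftPart hp φ]
  exact comp_leftMul_mem_closure_range hp hsa hgen φ.1.2

lemma denseRange_rightPartMap (hp : p ∈ M) {ξ : H} (hgen : IsGeneratingVector M p ξ)
    (hξ : p ξ = ξ) : DenseRange (rightPartMap hp hξ) := by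
  refine denseRange_of_isInducing (.comp .subtypeVal .subtypeVal) fun φ => ?_
  change ((φ : predual M) : ↥(carrier M) →L[ℂ] ℂ) ∈ closure (Set.range (dualVecFunctional M ξ))
  rw [← comp_rightMul_of_mem_rightPart hp φ]
  exact comp_rightMul_mem_closure_range hp hgen φ.1.2

end Parts

theorem leftPart_rightPart_wcg (p : H →L[ℂ] H) (hp : IsCyclicProjection M p) :
    (∃ K : Set ↥(leftPart M p hp.1.1),
      IsCompact (toWeakSpaceCLM ℂ ↥(leftPart M p hp.1.1) '' K) ∧
      Dense (Submodule.span ℂ K : Set ↥(leftPart M p hp.1.1))) ∧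
    (∃ K : Set ↥(rightPart M p hp.1.1),
      IsCompact (toWeakSpaceCLM ℂ ↥(rightPart M p hp.1.1) '' K) ∧
      Dense (Submodule.span ℂ K : Set ↥(rightPart M p hp.1.1))) := by
  obtain ⟨⟨hpM, hsa, hpp⟩, ξ, hgen⟩ := hp
  have hξ : p ξ = ξ := hgen.apply_eq hpp
  have hξ' : adjoint p ξ = ξ := by rwa [hsa.adjoint_eq]
  exact ⟨exists_isCompact_weak_dense_span_of_denseRange (leftPartMap hpM hξ')
      (isCompact_toWeakSpace_closedBall 1) (denseRange_leftPartMap hpM hsa hgen hξ'),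
    exists_isCompact_weak_dense_span_of_denseRange (rightPartMap hpM hξ)
      (isCompact_toWeakSpace_closedBall_strongDual 1) (denseRange_rightPartMap hpM hgen hξ)⟩

end Paper
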